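/- arXiv:2106.05914 — 3 statements merged into one kernel-verified Lean document; each statement's English description precedes it below -/
import Mathlib

section
/- Let f be a continuous function on [0, ∞) and 0 < p ≤ 1. If f(sqrt(a*b)) ≤ f(((a^p + b^p)/2)^(1/p)) for all non-negative reals a ≤ b, then f is monotone non-decreasing on [0, ∞). -/
/-!
For `0 ≤ x ≤ y` there are `0 ≤ a ≤ b` with geometric mean `x` and `p`-power mean `y`: for
`x > 0` keep `a * b = x ^ 2` and let `b` grow from `x`, so that the power mean moves continuously
from `x` to `∞`; for `x = 0` take `a = 0`. The hypothesis then reads `f x ≤ f y`.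
-/

open Set

noncomputable def powerMean (p a b : ℝ) : ℝ := ((a ^ p + b ^ p) / 2) ^ (1 / p)

section PowerMean

variable {p a a' b b' : ℝ}

lemma powerMean_self (hp : p ≠ 0) (ha : 0 ≤ a) : powerMean p a a = a := by
  rw [powerMean, add_self_div_two, ← Real.rpow_mul ha, mul_one_div_cancel hp, Real.rpow_one]

lemma powerMean_zero_two_rpow_mul (hp : p ≠ 0) (hb : 0 ≤ b) :
    powerMean p 0 (2 ^ (1 / p) * b) = b := by
  rw [powerMean, Real.zero_rpow hp, zero_add, Real.mul_rpow (by positivity) hb,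
    ← Real.rpow_mul zero_le_two, one_div_mul_cancel hp, Real.rpow_one,
    mul_div_cancel_left₀ _ two_ne_zero, ← Real.rpow_mul hb, mul_one_div_cancel hp, Real.rpow_one]

lemma powerMean_le_powerMean (hp : 0 < p) (ha : 0 ≤ a) (hb : 0 ≤ b) (haa : a ≤ a')
    (hbb : b ≤ b') : powerMean p a b ≤ powerMean p a' b' := by
  unfold powerMean
  gcongr

lemma continuousOn_powerMean_sq_div (hp : 0 < p) (x : ℝ) :
    ContinuousOn (fun t ↦ powerMean p (x ^ 2 / t) t) (Ioi 0) := by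
  refine ContinuousOn.rpow_const (ContinuousOn.div_const (ContinuousOn.add ?_ ?_) _) ?_
  · exact (continuousOn_const.div continuousOn_id fun t ht ↦ ne_of_gt ht).rpow_const
      fun t _ ↦ Or.inr hp.le
  · exact continuousOn_id.rpow_const fun t _ ↦ Or.inr hp.le
  · exact fun t _ ↦ Or.inr (by positivity)

end PowerMean

lemma exists_sqrt_mul_eq_powerMean_eq {p x y : ℝ} (hp : 0 < p) (hx : 0 ≤ x) (hxy : x ≤ y) :
    ∃ a b, 0 ≤ a ∧ a ≤ b ∧ √(a * b) = x ∧ powerMean p a b = y := by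
  have hy : 0 ≤ y := hx.trans hxy
  rcases hx.eq_or_lt with rfl | hx
  · exact ⟨0, 2 ^ (1 / p) * y, le_rfl, by positivity, by simp,
      powerMean_zero_two_rpow_mul hp.ne' hy⟩
  set T := max x (2 ^ (1 / p) * y)
  have hxT : x ≤ T := le_max_left _ _
  have hyT : y ≤ powerMean p (x ^ 2 / T) T := calc
    y = powerMean p 0 (2 ^ (1 / p) * y) := (powerMean_zero_two_rpow_mul hp.ne' hy).symm
    _ ≤ powerMean p (x ^ 2 / T) T :=
      powerMean_le_powerMean hp le_rfl (by positivity) (by positivity) (le_max_right _ _)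
  have hxx : powerMean p (x ^ 2 / x) x = x := by
    rw [sq, mul_div_cancel_right₀ _ hx.ne', powerMean_self hp.ne' hx.le]
  obtain ⟨t, ⟨hxt, -⟩, hty⟩ := intermediate_value_Icc hxT
    ((continuousOn_powerMean_sq_div hp x).mono fun t ht ↦ hx.trans_le ht.1) ⟨by rwa [hxx], hyT⟩
  have ht : 0 < t := hx.trans_le hxt
  refine ⟨x ^ 2 / t, t, by positivity, ?_, ?_, hty⟩
  · rw [div_le_iff₀ ht]
    nlinarith
  · rw [div_mul_cancel₀ _ ht.ne', Real.sqrt_sq hx.le]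

theorem monotone_of_sqrt_le_power_mean_ineq_general (f : ℝ → ℝ) (p : ℝ)
    (hp0 : 0 < p)
    (h : ∀ a b : ℝ, 0 ≤ a → a ≤ b →
      f (Real.sqrt (a * b)) ≤ f (((a ^ p + b ^ p) / 2) ^ (1 / p))) :
    MonotoneOn f (Set.Ici 0) := by
  intro x hx y _ hxy
  obtain ⟨a, b, ha, hab, hx_eq, hy_eq⟩ := exists_sqrt_mul_eq_powerMean_eq hp0 hx hxy
  calc f x = f √(a * b) := by rw [hx_eq]
    _ ≤ f (powerMean p a b) := h a b ha hab
    _ = f y := by rw [hy_eq]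

theorem monotone_of_sqrt_le_power_mean_ineq (f : ℝ → ℝ) (p : ℝ)
    (hp0 : 0 < p) (hp1 : p ≤ 1) (hf : ContinuousOn f (Set.Ici 0))
    (h : ∀ a b : ℝ, 0 ≤ a → a ≤ b →
      f (Real.sqrt (a * b)) ≤ f (((a ^ p + b ^ p) / 2) ^ (1 / p))) :
    MonotoneOn f (Set.Ici 0) :=
  monotone_of_sqrt_le_power_mean_ineq_general f p hp0 h
end

section
/- For real numbers q > 1 and r with 1 < r ≤ min(2, q), and positive definite n×n complex matrices A and B, one has ((A + B)/2)^r ≤ ((A^q + B^q)/2)^(r/q) in the Loewner order. -/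
open scoped ComplexOrder

/-- The real power of a matrix, via the continuous functional calculus. -/
noncomputable def mpow {n : ℕ} (A : Matrix (Fin n) (Fin n) ℂ) (p : ℝ) :
    Matrix (Fin n) (Fin n) ℂ :=
  cfc (fun x : ℝ => x ^ p) A

/-!
For `1 ≤ r ≤ 2` the map `a ↦ a ^ r` is operator convex, and for `s = r / q ∈ [0, 1]` the map
`a ↦ a ^ s` is operator concave. Hence
`((A + B) / 2) ^ r ≤ (A ^ r + B ^ r) / 2 = ((A ^ q) ^ s + (B ^ q) ^ s) / 2`
and the last term is at most `((A ^ q + B ^ q) / 2) ^ s`.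
Operator convexity for `1 < r < 2` comes from the integral representation
`x ^ r = ∫ t ^ (r - 1) * (x / t + t / (t + x) - 1) dμ(t)`: each integrand is an affine function
of `x` plus a positive multiple of the operator convex `(t + x)⁻¹`. For `r = 2` it is the
identity `α a² + β b² - (α a + β b)² = α β (a - b)²` when `α + β = 1`.
-/

open Set Real MeasureTheory
open scoped NNReal

section CStarAlgebra

variable {A : Type*} [CStarAlgebra A] [PartialOrder A] [StarOrderedRing A]

lemma CStarAlgebra.convexOn_sq : ConvexOn ℝ {a : A | IsSelfAdjoint a} (fun a : A => a ^ 2) := by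
  refine ⟨fun a ha b hb α β _ _ _ =>
    ((IsSelfAdjoint.all α).smul ha).add ((IsSelfAdjoint.all β).smul hb), ?_⟩
  intro a ha b hb α β hα hβ hαβ
  have hgap : α • a ^ 2 + β • b ^ 2 - (α • a + β • b) ^ 2
      = (α * β) • (star (a - b) * (a - b)) := by
    rw [(ha.sub hb).star_eq]
    obtain rfl : β = 1 - α := by linarith
    simp only [sq, mul_add, add_mul, mul_sub, sub_mul, smul_mul_assoc, mul_smul_comm]
    module
  rw [← sub_nonneg, hgap]
  exact smul_nonneg (mul_nonneg hα hβ) (star_mul_self_nonneg _)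

end CStarAlgebra

namespace CFC

section UnitalCStarAlgebra

variable {A : Type*} [CStarAlgebra A] [PartialOrder A] [StarOrderedRing A]

lemma convexOn_cfc_rpowIntegrand₁₂ {p t : ℝ} (ht : 0 < t) :
    ConvexOn ℝ (Ici (0 : A)) (cfc (rpowIntegrand₁₂ p t)) := by
  have h_eq : (Ici (0 : A)).EqOn (cfc (rpowIntegrand₁₂ p t))
      (fun x : A => (t ^ (p - 1) * t⁻¹) • x
        + t ^ p • Ring.inverse (algebraMap ℝ A t + x) - algebraMap ℝ A (t ^ (p - 1))) := by
    intro x hx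
    have hspec : ∀ r ∈ spectrum ℝ x, t + r ≠ 0 := by grind
    have hinv : ContinuousOn (fun z : ℝ => (t + z)⁻¹) (spectrum ℝ x) := by
      fun_prop (disch := grind -abstractProof)
    have hfun : rpowIntegrand₁₂ p t
        = fun z => ((t ^ (p - 1) * t⁻¹) * z + t ^ p * (t + z)⁻¹) - t ^ (p - 1) := by
      ext z
      simp only [rpowIntegrand₁₂]
      rw [show t ^ p = t ^ (p - 1) * t by rw [← rpow_add_one ht.ne']; ring_nf]
      ring
    rw [hfun, cfc_sub _ _ x (by fun_prop) (by fun_prop),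
      cfc_add x _ _ (by fun_prop) (by fun_prop), cfc_const_mul _ _ x (by fun_prop),
      cfc_const_mul _ _ x hinv, cfc_inv _ _ hspec ..,
      cfc_const_add .., cfc_id' .., cfc_const ..]
  refine ConvexOn.congr ?_ h_eq.symm
  refine ConvexOn.sub ?_ (concaveOn_const _ (convex_Ici 0))
  refine ConvexOn.add ?_ ?_
  · exact (LinearMap.lsmul ℝ A (t ^ (p - 1) * t⁻¹)).convexOn (convex_Ici 0)
  · exact ConvexOn.smul (by positivity) <| CStarAlgebra.convexOn_ringInverse_algebraMap_add ht

end UnitalCStarAlgebra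

section NonUnitalCStarAlgebra

variable {A : Type*} [NonUnitalCStarAlgebra A] [PartialOrder A] [StarOrderedRing A]

lemma convexOn_cfcₙ_rpowIntegrand₁₂ {p t : ℝ} (ht : 0 < t) :
    ConvexOn ℝ (Ici (0 : A)) (cfcₙ (rpowIntegrand₁₂ p t)) := by
  apply CStarAlgebra.convexOn_cfcₙ_of_convexOn_cfc
  refine (convexOn_cfc_rpowIntegrand₁₂ ht).subset CStarAlgebra.inr_map_Ici_zero ?_
  exact Convex.linear_image (convex_Ici _) (Unitization.inrHom ℝ ℂ A)

lemma convexOn_nnrpow_of_mem_Ioo {p : ℝ≥0} (hp : p ∈ Ioo 1 2) :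
    ConvexOn ℝ (Ici (0 : A)) (fun a : A => a ^ p) := by
  obtain ⟨μ, hμ⟩ := exists_measure_nnrpow_eq_integral_cfcₙ_rpowIntegrand₁₂ A hp
  have h_eq : (Ici 0).EqOn (fun a : A => a ^ p)
      (fun a : A => ∫ t in Ioi 0, cfcₙ (rpowIntegrand₁₂ p t) a ∂μ) := fun a ha => (hμ a ha).2
  refine ConvexOn.congr ?_ h_eq.symm
  refine integral_convexOn_of_integrand_ae (convex_Ici _) ?_ fun a ha => (hμ a ha).1
  filter_upwards [ae_restrict_mem measurableSet_Ioi] with t ht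
  exact convexOn_cfcₙ_rpowIntegrand₁₂ ht

end NonUnitalCStarAlgebra

section UnitalCStarAlgebra

variable {A : Type*} [CStarAlgebra A] [PartialOrder A] [StarOrderedRing A]

lemma convexOn_rpow {p : ℝ} (hp : p ∈ Icc 1 2) :
    ConvexOn ℝ (Ici (0 : A)) (fun a : A => a ^ p) := by
  obtain rfl | hp1 := hp.1.eq_or_lt
  · exact (convexOn_id (convex_Ici 0)).congr fun a ha => (rpow_one a ha).symm
  obtain rfl | hp2 := hp.2.eq_or_lt
  · have hsa : Ici (0 : A) ⊆ {a | IsSelfAdjoint a} := fun a ha => IsSelfAdjoint.of_nonneg ha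
    refine (CStarAlgebra.convexOn_sq.subset hsa (convex_Ici 0)).congr fun a ha => ?_
    simpa using (rpow_natCast a 2 ha).symm
  · let q : ℝ≥0 := ⟨p, by linarith⟩
    have hq : q ∈ Ioo 1 2 := ⟨by exact_mod_cast hp1, by exact_mod_cast hp2⟩
    exact (convexOn_nnrpow_of_mem_Ioo hq).congr fun a _ =>
      nnrpow_eq_rpow (zero_lt_one.trans hq.1)

lemma rpow_mean_le_rpow_powerMean {a b : A} (ha : 0 ≤ a) (hb : 0 ≤ b) {α β : ℝ} (hα : 0 ≤ α)
    (hβ : 0 ≤ β) (hαβ : α + β = 1) {q r : ℝ} (hr : r ∈ Icc 1 2) (hrq : r ≤ q) :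
    (α • a + β • b) ^ r ≤ (α • a ^ q + β • b ^ q) ^ (r / q) := by
  have hq : 0 < q := by linarith [hr.1]
  have hs : r / q ∈ Icc 0 1 :=
    ⟨div_nonneg (by linarith [hr.1]) hq.le, div_le_one_of_le₀ hrq hq.le⟩
  have hpow (c : A) (hc : 0 ≤ c) : (c ^ q) ^ (r / q) = c ^ r := by
    rw [rpow_rpow_of_exponent_nonneg c q (r / q) hq.le hs.1 hc, mul_div_cancel₀ _ hq.ne']
  calc (α • a + β • b) ^ r ≤ α • a ^ r + β • b ^ r := (convexOn_rpow hr).2 ha hb hα hβ hαβ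
    _ = α • (a ^ q) ^ (r / q) + β • (b ^ q) ^ (r / q) := by rw [hpow a ha, hpow b hb]
    _ ≤ (α • a ^ q + β • b ^ q) ^ (r / q) :=
      (concaveOn_rpow hs).2 rpow_nonneg rpow_nonneg hα hβ hαβ

end UnitalCStarAlgebra

end CFC

section Matrix

open scoped Matrix.Norms.L2Operator MatrixOrder

variable {n : ℕ}

lemma mpow_eq_rpow {A : Matrix (Fin n) (Fin n) ℂ} (hA : 0 ≤ A) (p : ℝ) : mpow A p = A ^ p :=
  (CFC.rpow_eq_cfc_real hA).symm

lemma mpow_mean_le_mpow_powerMean {A B : Matrix (Fin n) (Fin n) ℂ} (hA : A.PosSemidef)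
    (hB : B.PosSemidef) {α β : ℝ} (hα : 0 ≤ α) (hβ : 0 ≤ β) (hαβ : α + β = 1) {q r : ℝ}
    (hr : r ∈ Icc 1 2) (hrq : r ≤ q) :
    (mpow (α • mpow A q + β • mpow B q) (r / q) - mpow (α • A + β • B) r).PosSemidef := by
  have hA₀ := hA.nonneg
  have hB₀ := hB.nonneg
  have hmean {X Y : Matrix (Fin n) (Fin n) ℂ} (hX : 0 ≤ X) (hY : 0 ≤ Y) : 0 ≤ α • X + β • Y :=
    add_nonneg (smul_nonneg hα hX) (smul_nonneg hβ hY)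
  rw [← Matrix.le_iff, mpow_eq_rpow hA₀, mpow_eq_rpow hB₀, mpow_eq_rpow (hmean hA₀ hB₀),
    mpow_eq_rpow (hmean CFC.rpow_nonneg CFC.rpow_nonneg)]
  exact CFC.rpow_mean_le_rpow_powerMean hA₀ hB₀ hα hβ hαβ hr hrq

end Matrix

theorem mean_pow_r_le_power_mean_pow_r_general {n : ℕ} {A B : Matrix (Fin n) (Fin n) ℂ}
    (q r : ℝ) (hr1 : 1 < r) (hr2 : r ≤ min 2 q)
    (hA : A.PosDef) (hB : B.PosDef) :
    (mpow ((2 : ℂ)⁻¹ • (mpow A q + mpow B q)) (r / q)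
      - mpow ((2 : ℂ)⁻¹ • (A + B)) r).PosSemidef := by
  have half (X : Matrix (Fin n) (Fin n) ℂ) : (2 : ℂ)⁻¹ • X = (2⁻¹ : ℝ) • X := by
    rw [← Complex.coe_smul]; norm_num
  rw [half, half, smul_add, smul_add]
  exact mpow_mean_le_mpow_powerMean hA.posSemidef hB.posSemidef (by norm_num) (by norm_num)
    (by norm_num) ⟨hr1.le, hr2.trans (min_le_left _ _)⟩ (hr2.trans (min_le_right _ _))

theorem mean_pow_r_le_power_mean_pow_r {n : ℕ} {A B : Matrix (Fin n) (Fin n) ℂ}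
    (q r : ℝ) (hq : 1 < q) (hr1 : 1 < r) (hr2 : r ≤ min 2 q)
    (hA : A.PosDef) (hB : B.PosDef) :
    (mpow ((2 : ℂ)⁻¹ • (mpow A q + mpow B q)) (r / q)
      - mpow ((2 : ℂ)⁻¹ • (A + B)) r).PosSemidef :=
  mean_pow_r_le_power_mean_pow_r_general q r hr1 hr2 hA hB
end

section
/- Let X, Y be positive semidefinite n×n complex matrices with X² ≤ Y² ≤ 2X² (Loewner order). Then there exist positive semidefinite matrices A, B such that (A + B)/2 = X and (A² + B²)/2 = Y². -/
open scoped ComplexOrder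
open Matrix

/-- Operator monotonicity of the square root for PSD matrices:
if `A² ≤ B²` then `A ≤ B`. -/
lemma sqrt_loewner_mono {n : ℕ} {A B : Matrix (Fin n) (Fin n) ℂ}
    (hA : A.PosSemidef) (hB : B.PosSemidef)
    (h : (B ^ 2 - A ^ 2).PosSemidef) : (B - A).PosSemidef := by
  have hH : (B - A).IsHermitian := hB.1.sub hA.1
  refine hH.posSemidef_iff_eigenvalues_nonneg.mpr fun i => show (0 : ℝ) ≤ hH.eigenvalues i from ?_
  set lam : ℝ := hH.eigenvalues i with hlam
  set v : Fin n → ℂ := ⇑(hH.eigenvectorBasis i) with hv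
  have hvne : v ≠ 0 := by
    have := (hH.eigenvectorBasis).orthonormal.ne_zero i
    intro hcon
    apply this
    ext j
    have := congrFun hcon j
    simpa [v] using this
  have hev : (B - A) *ᵥ v = (lam : ℂ) • v := by
    have h0 := hH.mulVec_eigenvectorBasis i
    have he : ((lam : ℂ) • v) = lam • v := by
      ext j; simp [Complex.real_smul]
    rw [he]; exact h0
  set s : ℂ := star v ⬝ᵥ ((B + A) *ᵥ v) with hs
  have hsplit : s = star v ⬝ᵥ (B *ᵥ v) + star v ⬝ᵥ (A *ᵥ v) := by
    rw [hs, Matrix.add_mulVec, dotProduct_add]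
  have hsA : 0 ≤ star v ⬝ᵥ (A *ᵥ v) := hA.dotProduct_mulVec_nonneg v
  have hsB : 0 ≤ star v ⬝ᵥ (B *ᵥ v) := hB.dotProduct_mulVec_nonneg v
  have hs0 : 0 ≤ s := hsplit ▸ add_nonneg hsB hsA
  -- key identity : vᴴ (B² - A²) v = lam * s
  have hBA : B * (B - A) + (B - A) * B + (A * (B - A) + (B - A) * A)
      = 2 • (B ^ 2 - A ^ 2) := by noncomm_ring
  have key : star v ⬝ᵥ ((B ^ 2 - A ^ 2) *ᵥ v) = (lam : ℂ) * s := by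
    have e1 : ∀ M : Matrix (Fin n) (Fin n) ℂ,
        star v ⬝ᵥ ((M * (B - A)) *ᵥ v) = (lam : ℂ) * (star v ⬝ᵥ (M *ᵥ v)) := by
      intro M
      rw [← Matrix.mulVec_mulVec, hev, Matrix.mulVec_smul, dotProduct_smul]
      simp [smul_eq_mul]
    have e2 : ∀ M : Matrix (Fin n) (Fin n) ℂ, M.IsHermitian →
        star v ⬝ᵥ (((B - A) * M) *ᵥ v) = (lam : ℂ) * (star v ⬝ᵥ (M *ᵥ v)) := by
      intro M hM
      rw [← Matrix.mulVec_mulVec, Matrix.dotProduct_mulVec (star v) (B - A),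
        ← hH, ← Matrix.star_mulVec, hev]
      rw [star_smul, smul_dotProduct]
      simp [Matrix.dotProduct_mulVec, smul_eq_mul, Complex.conj_ofReal]
    have h2v : star v ⬝ᵥ ((2 • (B ^ 2 - A ^ 2)) *ᵥ v)
        = 2 * (star v ⬝ᵥ ((B ^ 2 - A ^ 2) *ᵥ v)) := by
      rw [two_smul, Matrix.add_mulVec, dotProduct_add, two_mul]
    have := congrArg (fun M => star v ⬝ᵥ (M *ᵥ v)) hBA
    simp only [Matrix.add_mulVec, dotProduct_add] at this
    rw [e1 B, e2 B hB.1, e1 A, e2 A hA.1, h2v] at this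
    have : 2 * ((lam : ℂ) * s) = 2 * (star v ⬝ᵥ ((B ^ 2 - A ^ 2) *ᵥ v)) := by
      rw [← this, hs, Matrix.add_mulVec, dotProduct_add]; ring
    have := mul_left_cancel₀ (two_ne_zero (α := ℂ)) this
    exact this.symm
  have hpos : 0 ≤ (lam : ℂ) * s := key ▸ h.dotProduct_mulVec_nonneg v
  -- now conclude lam ≥ 0
  rcases eq_or_lt_of_le hs0 with hseq | hslt
  · -- s = 0, hence Av = Bv = 0, hence lam • v = 0, lam = 0
    have hA0 : star v ⬝ᵥ (A *ᵥ v) = 0 := by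
      by_contra hne
      have : 0 < star v ⬝ᵥ (A *ᵥ v) := lt_of_le_of_ne hsA (Ne.symm hne)
      have : 0 < s := hsplit ▸ add_pos_of_nonneg_of_pos hsB this
      exact absurd hseq (ne_of_lt this)
    have hB0 : star v ⬝ᵥ (B *ᵥ v) = 0 := by
      rw [hsplit, hA0, add_zero] at hseq
      exact hseq.symm
    have hAv : A *ᵥ v = 0 := (hA.dotProduct_mulVec_zero_iff v).mp hA0
    have hBv : B *ᵥ v = 0 := (hB.dotProduct_mulVec_zero_iff v).mp hB0
    have : (lam : ℂ) • v = 0 := by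
      rw [← hev, Matrix.sub_mulVec, hAv, hBv, sub_zero]
    rcases smul_eq_zero.mp this with h0 | h0
    · simpa using le_of_eq (congrArg Complex.re h0).symm
    · exact absurd h0 hvne
  · -- s > 0
    obtain ⟨r, hr, hrs⟩ : ∃ r : ℝ, 0 < r ∧ s = (r : ℂ) := by
      rw [Complex.lt_def] at hslt
      exact ⟨s.re, hslt.1, by rw [Complex.ext_iff]; simpa using hslt.2.symm⟩
    rw [hrs, ← Complex.ofReal_mul] at hpos
    have : (0 : ℝ) ≤ lam * r := by
      rw [Complex.le_def] at hpos
      simpa using hpos.1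
    nlinarith

theorem inverse_problem_non_kubo_ando {n : ℕ} {X Y : Matrix (Fin n) (Fin n) ℂ}
    (hX : X.PosSemidef) (hY : Y.PosSemidef)
    (h1 : (Y ^ 2 - X ^ 2).PosSemidef) (h2 : (2 • X ^ 2 - Y ^ 2).PosSemidef) :
    ∃ A B : Matrix (Fin n) (Fin n) ℂ, A.PosSemidef ∧ B.PosSemidef ∧
      (2 : ℂ)⁻¹ • (A + B) = X ∧ (2 : ℂ)⁻¹ • (A ^ 2 + B ^ 2) = Y ^ 2 := by
  open MatrixOrder in set D : Matrix (Fin n) (Fin n) ℂ := CFC.sqrt (Y ^ 2 - X ^ 2) with hD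
  have hDps : D.PosSemidef := by open MatrixOrder in exact (CFC.sqrt_nonneg _).posSemidef
  have hDsq : D ^ 2 = Y ^ 2 - X ^ 2 := by open MatrixOrder in exact CFC.sq_sqrt _ h1.nonneg
  have hXD : (X - D).PosSemidef := by
    apply sqrt_loewner_mono hDps hX
    have : X ^ 2 - D ^ 2 = 2 • X ^ 2 - Y ^ 2 := by
      rw [hDsq, two_smul]; abel
    rw [this]; exact h2
  refine ⟨X + D, X - D, hX.add hDps, hXD, ?_, ?_⟩
  · have : X + D + (X - D) = (2 : ℂ) • X := by
      rw [two_smul]; abel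
    rw [this, smul_smul, inv_mul_cancel₀ (two_ne_zero (α := ℂ)), one_smul]
  · have hexp : (X + D) ^ 2 + (X - D) ^ 2 = (2 : ℂ) • (X ^ 2 + D ^ 2) := by
      have : ((2 : ℂ) • (X ^ 2 + D ^ 2) : Matrix (Fin n) (Fin n) ℂ)
          = 2 • (X ^ 2 + D ^ 2) := by
        rw [two_smul, two_smul]
      rw [this]; noncomm_ring
    have : X ^ 2 + D ^ 2 = Y ^ 2 := by rw [hDsq]; abel
    rw [hexp, this, smul_smul, inv_mul_cancel₀ (two_ne_zero (α := ℂ)), one_smul]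
end
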